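/- For all n ≥ 1 and all letters ℓ₁,…,ℓ_n ∈ {1,…,d}: the left-bracketed area arealb(ℓ₁⋯ℓ_n) equals Σ_{σ∈S_n} f_n(σ) · ℓ_{σ(1)}ℓ_{σ(2)}⋯ℓ_{σ(n)}, where f_n(σ) := ∏_{i=1}^n g_i(σ) and g_i(σ) := +1 if σ^{−1}(j) < σ^{−1}(i) for every j < i, and g_i(σ) := −1 otherwise. -/

import Mathlib

open scoped TensorProduct

set_option maxSynthPendingDepth 3

noncomputable section

abbrev Word (d : ℕ) := List (Fin d)
abbrev Ten (d : ℕ) := Word d →₀ ℝ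

variable {d : ℕ}

def wd (w : Word d) : Ten d := Finsupp.single w 1

def lift2 (f : Word d → Word d → Ten d) : Ten d →ₗ[ℝ] Ten d →ₗ[ℝ] Ten d :=
  Finsupp.lsum ℝ fun u => LinearMap.toSpanSingleton ℝ (Ten d →ₗ[ℝ] Ten d)
    (Finsupp.lsum ℝ fun v => LinearMap.toSpanSingleton ℝ (Ten d) (f u v))

def shR : Word d → Word d → Ten d
  | [], v => wd v.reverse
  | a :: u, [] => wd (a :: u).reverse
  | a :: u, b :: v =>
      Finsupp.mapDomain (fun w => w ++ [a]) (shR u (b :: v)) +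
        Finsupp.mapDomain (fun w => w ++ [b]) (shR (a :: u) v)
termination_by u v => u.length + v.length

def shW (u v : Word d) : Ten d := shR u.reverse v.reverse

def shuffle : Ten d →ₗ[ℝ] Ten d →ₗ[ℝ] Ten d := lift2 shW

def hsW (u v : Word d) : Ten d :=
  match v.getLast? with
  | none => 0
  | some b => Finsupp.mapDomain (fun w => w ++ [b]) (shW u v.dropLast)

def halfSh : Ten d →ₗ[ℝ] Ten d →ₗ[ℝ] Ten d := lift2 hsW

def areaOp (x y : Ten d) : Ten d := halfSh x y - halfSh y x

def concW (u v : Word d) : Ten d := wd (u ++ v)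

def concM : Ten d →ₗ[ℝ] Ten d →ₗ[ℝ] Ten d := lift2 concW

def brk (x y : Ten d) : Ten d := concM x y - concM y x

/-- `X` generates the shuffle algebra: the smallest unital ⧢-subalgebra containing `X` is all. -/
def ShuffleGen (X : Set (Ten d)) : Prop :=
  ∀ p : Submodule ℝ (Ten d), wd ([] : Word d) ∈ p → X ⊆ ↑p →
    (∀ x ∈ p, ∀ y ∈ p, shuffle x y ∈ p) → ∀ z : Ten d, z ∈ p

def shPow (x : Ten d) : ℕ → Ten d
  | 0 => wd []
  | n + 1 => shuffle x (shPow x n)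

def monEval (X : Set (Ten d)) (m : ↥X →₀ ℕ) : Ten d :=
  (m.support.toList.map fun v : ↥X => shPow (v : Ten d) (m v)).foldr (fun a b => shuffle a b) (wd [])

def polyEval (X : Set (Ten d)) (p : MvPolynomial (↥X) ℝ) : Ten d :=
  ∑ m ∈ p.support, MvPolynomial.coeff m p • monEval X m

/-- `X` freely generates the shuffle algebra. -/
def FreeShuffleGen (X : Set (Ten d)) : Prop :=
  ShuffleGen X ∧ Function.Bijective (polyEval (d := d) X)

/-- Homogeneous component of degree `n`. -/
def Tn (d n : ℕ) : Submodule ℝ (Ten d) :=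
  Submodule.span ℝ {x | ∃ w : Word d, w.length = n ∧ x = wd w}

/-- The free Lie algebra: smallest subspace containing the letters, closed under bracket. -/
def freeLie (d : ℕ) : Submodule ℝ (Ten d) :=
  sInf {p | (∀ i : Fin d, wd [i] ∈ p) ∧ ∀ x ∈ p, ∀ y ∈ p, brk x y ∈ p}

/-- Pairing making the words orthonormal. -/
def pairT (x y : Ten d) : ℝ := x.sum fun w c => c * y w

/-- Smallest subspace containing the letters, closed under area. -/
def areaCl (d : ℕ) : Submodule ℝ (Ten d) :=
  sInf {p | (∀ i : Fin d, wd [i] ∈ p) ∧ ∀ x ∈ p, ∀ y ∈ p, areaOp x y ∈ p}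

def rhoW : Word d → Ten d
  | [] => 0
  | [i] => wd [i]
  | i :: j :: u =>
      concM (wd [i]) (rhoW (j :: u)) -
        concM (wd [(j :: u).getLast (by simp)]) (rhoW (i :: (j :: u).dropLast))
termination_by w => w.length
decreasing_by
  · simp
  · simp [List.length_dropLast]

def rhoMap : Ten d →ₗ[ℝ] Ten d :=
  Finsupp.lsum ℝ fun w => LinearMap.toSpanSingleton ℝ (Ten d) (rhoW w)

/-- Right-bracketing (Dynkin) map on words. -/
def rW : Word d → Ten d
  | [] => 0
  | [i] => wd [i]
  | i :: j :: u => brk (wd [i]) (rW (j :: u))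

def rMap : Ten d →ₗ[ℝ] Ten d :=
  Finsupp.lsum ℝ fun w => LinearMap.toSpanSingleton ℝ (Ten d) (rW w)

def wordsLen (d n : ℕ) : Finset (Word d) :=
  (Finset.univ : Finset (Fin n → Fin d)).image List.ofFn

def Rtens (d n : ℕ) : Ten d ⊗[ℝ] Ten d :=
  ∑ w ∈ wordsLen d n, wd w ⊗ₜ[ℝ] rW w

def top2 (f g : Ten d →ₗ[ℝ] Ten d →ₗ[ℝ] Ten d) :
    Ten d ⊗[ℝ] Ten d →ₗ[ℝ] Ten d ⊗[ℝ] Ten d →ₗ[ℝ] Ten d ⊗[ℝ] Ten d :=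
  TensorProduct.lift
    (((TensorProduct.mapBilinear (RingHom.id ℝ) (Ten d) (Ten d) (Ten d) (Ten d)).comp f).compl₂ g)

def brkL : Ten d →ₗ[ℝ] Ten d →ₗ[ℝ] Ten d := concM (d := d) - (concM (d := d)).flip

def areaL : Ten d →ₗ[ℝ] Ten d →ₗ[ℝ] Ten d := halfSh (d := d) - (halfSh (d := d)).flip

/-- The ▷ operation on the tensor square. -/
def rop : Ten d ⊗[ℝ] Ten d →ₗ[ℝ] Ten d ⊗[ℝ] Ten d →ₗ[ℝ] Ten d ⊗[ℝ] Ten d :=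
  top2 halfSh brkL

/-- The symmetrized operation ▷_Sym. -/
def ropSym : Ten d ⊗[ℝ] Ten d →ₗ[ℝ] Ten d ⊗[ℝ] Ten d →ₗ[ℝ] Ten d ⊗[ℝ] Ten d :=
  top2 areaL brkL

/-- The ■ product: shuffle on the left, concatenation on the right. -/
def bop : Ten d ⊗[ℝ] Ten d →ₗ[ℝ] Ten d ⊗[ℝ] Ten d →ₗ[ℝ] Ten d ⊗[ℝ] Ten d :=
  top2 shuffle concM

/-- Labelled binary trees over the alphabet. -/
inductive LTree (d : ℕ) : Type
  | leaf : Fin d → LTree d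
  | node : LTree d → LTree d → LTree d

def leavesT : LTree d → ℕ
  | .leaf _ => 1
  | .node a b => leavesT a + leavesT b

def areaT : LTree d → Ten d
  | .leaf i => wd [i]
  | .node a b => areaOp (areaT a) (areaT b)

def lieT : LTree d → Ten d
  | .leaf i => wd [i]
  | .node a b => brk (lieT a) (lieT b)

def cT : LTree d → ℕ
  | .leaf _ => 1
  | .node a b => 2 * cT a * cT b * (leavesT a + leavesT b - 1)

/-- Left-bracketed area of a reversed word:
`arealbRev (ℓ_n :: … :: ℓ_1) = area(…area(area(ℓ₁,ℓ₂),ℓ₃)…,ℓ_n)`. -/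
def arealbRev : Word d → Ten d
  | [] => 0
  | [i] => wd [i]
  | j :: i :: u => areaOp (arealbRev (i :: u)) (wd [j])

/-- Left-bracketed area of a word:
`arealb(ℓ₁⋯ℓ_n) = area(…area(area(ℓ₁,ℓ₂),ℓ₃)…,ℓ_n)`. -/
def arealb (w : Word d) : Ten d := arealbRev w.reverse

/-- The sign `g_i(σ)`: `+1` if `σ⁻¹(j) < σ⁻¹(i)` for every `j < i`, `−1` otherwise. -/
def gsign (n : ℕ) (σ : Equiv.Perm (Fin n)) (i : Fin n) : ℝ :=
  if ∀ j : Fin n, j < i → σ.symm j < σ.symm i then 1 else -1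

/-- The sign `f_n(σ) = ∏_{i=1}^n g_i(σ)`. -/
def fsign (n : ℕ) (σ : Equiv.Perm (Fin n)) : ℝ :=
  ∏ i : Fin n, gsign n σ i


-- ===== auxiliary lemmas =====

lemma insertIdx_append_single {α : Type*} :
    ∀ (l : List α) (p : ℕ) (a b : α), p ≤ l.length →
      (l.insertIdx p a) ++ [b] = (l ++ [b]).insertIdx p a
  | l, 0, a, b, _ => rfl
  | c :: l', p + 1, a, b, h => by
      simp only [List.insertIdx_succ_cons, List.cons_append]
      rw [insertIdx_append_single l' p a b (Nat.le_of_succ_le_succ h)]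
  | [], p + 1, a, b, h => by simp at h

lemma lift2_wd (f : Word d → Word d → Ten d) (u v : Word d) :
    lift2 f (wd u) (wd v) = f u v := by
  simp [lift2, wd]

lemma shR_nil (u : Word d) : shR u [] = wd u.reverse := by
  cases u <;> simp [shR, wd]

lemma shW_nil (u : Word d) : shW u [] = wd u := by
  simp [shW, shR_nil]

lemma shR_single (a : Fin d) :
    ∀ u : Word d, shR [a] u =
      ∑ p ∈ Finset.range (u.length + 1), wd (u.reverse.insertIdx p a)
  | [] => by simp [shR]
  | b :: v => by
      rw [shR]
      rw [shR_single a v]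
      rw [Finsupp.mapDomain_finset_sum]
      simp only [shR, wd, Finsupp.mapDomain_single]
      rw [show (b :: v).reverse = v.reverse ++ [b] by simp]
      simp only [List.length_cons]
      conv_rhs => rw [Finset.sum_range_succ]
      rw [add_comm]
      congr 1
      next =>
        refine Finset.sum_congr rfl fun p hp => ?_
        have hp' : p ≤ v.reverse.length := by
          simpa using Nat.lt_succ_iff.mp (Finset.mem_range.mp hp)
        have := insertIdx_append_single v.reverse p a b hp'
        rw [this]
      next =>
        have : v.length + 1 = (v.reverse ++ [b]).length := by simp
        rw [this, List.insertIdx_length_self]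

lemma shW_single (a : Fin d) (v : Word d) :
    shW [a] v = ∑ p ∈ Finset.range (v.length + 1), wd (v.insertIdx p a) := by
  simp [shW, shR_single]

lemma hsW_single_right (u : Word d) (a : Fin d) : hsW u [a] = wd (u ++ [a]) := by
  simp [hsW, shW_nil, wd, Finsupp.mapDomain_single]

lemma hsW_single_left (a : Fin d) (w : Word d) (hw : w ≠ []) :
    hsW [a] w = ∑ p ∈ Finset.range w.length, wd (w.insertIdx p a) := by
  obtain ⟨v, b, rfl⟩ : ∃ v b, w = v ++ [b] := by
    rcases List.eq_nil_or_concat w with h | ⟨v, b, h⟩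
    · exact absurd h hw
    · exact ⟨v, b, by simpa using h⟩
  rw [hsW]
  simp only [List.getLast?_concat, List.dropLast_concat]
  rw [shW_single, Finsupp.mapDomain_finset_sum]
  simp only [wd, Finsupp.mapDomain_single, List.length_append, List.length_singleton]
  refine Finset.sum_congr rfl fun p hp => ?_
  rw [insertIdx_append_single v p a b (Nat.lt_succ_iff.mp (Finset.mem_range.mp hp))]


lemma halfSh_wd (u v : Word d) : halfSh (wd u) (wd v) = hsW u v := lift2_wd _ u v

lemma areaOp_wd_letter (w : Word d) (hw : w ≠ []) (a : Fin d) :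
    areaOp (wd w) (wd [a]) =
      ∑ p ∈ Finset.range (w.length + 1),
        (if p = w.length then (1:ℝ) else -1) • wd (w.insertIdx p a) := by
  rw [areaOp, halfSh_wd, halfSh_wd, hsW_single_right, hsW_single_left a w hw]
  rw [Finset.sum_range_succ]
  have h1 : w.insertIdx w.length a = w ++ [a] := List.insertIdx_length_self
  rw [if_pos rfl, h1, one_smul]
  have h2 : ∀ p ∈ Finset.range w.length,
      (if p = w.length then (1:ℝ) else -1) • wd (w.insertIdx p a)
        = -(wd (w.insertIdx p a)) := by
    intro p hp
    rw [if_neg (Nat.ne_of_lt (Finset.mem_range.mp hp)), neg_one_smul]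
  rw [Finset.sum_congr rfl h2, Finset.sum_neg_distrib]
  abel

lemma areaOp_sum_left {ι : Type*} (s : Finset ι) (c : ι → ℝ) (x : ι → Ten d) (y : Ten d) :
    areaOp (∑ i ∈ s, c i • x i) y = ∑ i ∈ s, c i • areaOp (x i) y := by
  simp only [areaOp, map_sum, map_smul, LinearMap.sum_apply, LinearMap.smul_apply,
    smul_sub]
  rw [← Finset.sum_sub_distrib]

lemma arealb_append (w : Word d) (hw : w ≠ []) (a : Fin d) :
    arealb (w ++ [a]) = areaOp (arealb w) (wd [a]) := by
  unfold arealb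
  rw [List.reverse_append]
  cases h : w.reverse with
  | nil => exact absurd (by simpa using h) hw
  | cons i u => simp [arealbRev]


def tauFun {n : ℕ} (σ : Equiv.Perm (Fin n)) (p : Fin (n + 1)) (k : Fin (n + 1)) :
    Fin (n + 1) :=
  if h : (k : ℕ) < (p : ℕ) then
    (σ ⟨k, by have := p.isLt; omega⟩).castSucc
  else if h2 : (k : ℕ) = (p : ℕ) then Fin.last n
  else (σ ⟨(k : ℕ) - 1, by have := k.isLt; omega⟩).castSucc

def tauInv {n : ℕ} (σ : Equiv.Perm (Fin n)) (p : Fin (n + 1)) : Fin (n + 1) → Fin (n + 1) :=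
  Fin.lastCases p fun j =>
    if ((σ.symm j : Fin n) : ℕ) < (p : ℕ) then (σ.symm j).castSucc else (σ.symm j).succ

lemma tau_left {n : ℕ} (σ : Equiv.Perm (Fin n)) (p : Fin (n + 1)) :
    Function.LeftInverse (tauInv σ p) (tauFun σ p) := by
  intro k
  by_cases h1 : (k : ℕ) < (p : ℕ)
  · rw [tauFun, dif_pos h1]
    rw [tauInv, Fin.lastCases_castSucc, Equiv.symm_apply_apply]
    rw [if_pos (by simpa using h1)]
    ext; simp
  · by_cases h2 : (k : ℕ) = (p : ℕ)
    · rw [tauFun, dif_neg h1, dif_pos h2]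
      rw [tauInv, Fin.lastCases_last]
      ext; simp [h2]
    · rw [tauFun, dif_neg h1, dif_neg h2]
      rw [tauInv, Fin.lastCases_castSucc, Equiv.symm_apply_apply]
      rw [if_neg (by simp only [Fin.val_mk]; omega)]
      ext
      simp only [Fin.val_succ, Fin.val_mk]
      omega

def tauP {n : ℕ} (σ : Equiv.Perm (Fin n)) (p : Fin (n + 1)) : Equiv.Perm (Fin (n + 1)) :=
  ⟨tauFun σ p, tauInv σ p, tau_left σ p,
    (tau_left σ p).rightInverse_of_surjective
      ((Finite.injective_iff_surjective).mp (tau_left σ p).injective)⟩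

lemma tauP_apply {n : ℕ} (σ : Equiv.Perm (Fin n)) (p : Fin (n + 1)) (k : Fin (n + 1)) :
    tauP σ p k = tauFun σ p k := rfl

lemma tauP_symm_apply {n : ℕ} (σ : Equiv.Perm (Fin n)) (p : Fin (n + 1)) (k : Fin (n + 1)) :
    (tauP σ p).symm k = tauInv σ p k := rfl

lemma tauP_self {n : ℕ} (σ : Equiv.Perm (Fin n)) (p : Fin (n + 1)) :
    tauP σ p p = Fin.last n := by
  rw [tauP_apply, tauFun, dif_neg (lt_irrefl _)]
  simp


lemma tauFun_lt {n : ℕ} (σ : Equiv.Perm (Fin n)) (p : Fin (n + 1)) (k : Fin (n + 1))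
    (h : (k : ℕ) < (p : ℕ)) (hk : (k : ℕ) < n) :
    tauFun σ p k = (σ ⟨k, hk⟩).castSucc := by
  rw [tauFun, dif_pos h]

lemma tauFun_gt {n : ℕ} (σ : Equiv.Perm (Fin n)) (p : Fin (n + 1)) (k : Fin (n + 1))
    (h : (p : ℕ) < (k : ℕ)) (hk : (k : ℕ) - 1 < n) :
    tauFun σ p k = (σ ⟨(k : ℕ) - 1, hk⟩).castSucc := by
  rw [tauFun, dif_neg (by omega), dif_neg (by omega)]

lemma tauP_word {n : ℕ} (ℓ : Fin (n + 1) → Fin d) (σ : Equiv.Perm (Fin n)) (p : Fin (n + 1)) :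
    (List.ofFn fun k => ℓ (tauP σ p k)) =
      (List.ofFn fun k : Fin n => ℓ ((σ k).castSucc)).insertIdx p (ℓ (Fin.last n)) := by
  have hp : (p : ℕ) ≤ n := Nat.lt_succ_iff.mp p.isLt
  have hlen : (List.ofFn fun k : Fin n => ℓ ((σ k).castSucc)).length = n := by simp
  have hple : (p : ℕ) ≤ (List.ofFn fun k : Fin n => ℓ ((σ k).castSucc)).length := by
    rw [hlen]; exact hp
  apply List.ext_getElem
  · rw [List.length_insertIdx, if_pos hple]; simp
  · intro i h1 h2
    rw [List.getElem_ofFn]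
    rcases lt_trichotomy i (p : ℕ) with h | h | h
    · rw [List.getElem_insertIdx_of_lt h h2]
      rw [List.getElem_ofFn]
      rw [tauP_apply, tauFun_lt σ p _ h (show i < n by omega)]
    · subst h
      rw [List.getElem_insertIdx_self h2]
      exact congrArg ℓ (tauP_self σ p)
    · obtain ⟨k, rfl⟩ : ∃ k, i = (p : ℕ) + k + 1 := ⟨i - p - 1, by omega⟩
      rw [List.getElem_insertIdx_add_succ _ _ _ _ (by rw [hlen]; simp at h1; omega)]
      rw [List.getElem_ofFn]
      rw [tauP_apply, tauFun_gt σ p _ (show (p:ℕ) < (p:ℕ) + k + 1 by omega)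
        (show (p:ℕ) + k + 1 - 1 < n by simp at h1; omega)]
      rfl


lemma tauP_symm_last {n : ℕ} (σ : Equiv.Perm (Fin n)) (p : Fin (n + 1)) :
    (tauP σ p).symm (Fin.last n) = p := by
  rw [tauP_symm_apply, tauInv, Fin.lastCases_last]

lemma tauP_symm_castSucc {n : ℕ} (σ : Equiv.Perm (Fin n)) (p : Fin (n + 1)) (j : Fin n) :
    (tauP σ p).symm j.castSucc =
      if ((σ.symm j : Fin n) : ℕ) < (p : ℕ) then (σ.symm j).castSucc else (σ.symm j).succ := by
  rw [tauP_symm_apply, tauInv, Fin.lastCases_castSucc]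

lemma mono_help {n : ℕ} (p : ℕ) (a b : Fin n) :
    ((if (a : ℕ) < p then a.castSucc else a.succ) <
      (if (b : ℕ) < p then b.castSucc else b.succ)) ↔ a < b := by
  split_ifs with h1 h2 h2 <;>
    simp only [Fin.lt_def, Fin.coe_castSucc, Fin.val_succ] <;> omega

lemma gsign_tauP_last {n : ℕ} (σ : Equiv.Perm (Fin n)) (p : Fin (n + 1)) :
    gsign (n + 1) (tauP σ p) (Fin.last n) = if (p : ℕ) = n then (1 : ℝ) else -1 := by
  rw [gsign]
  refine if_congr ?_ rfl rfl
  constructor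
  · intro H
    by_contra hne
    have hpn : (p : ℕ) < n := by have := p.isLt; omega
    have := H (σ ⟨p, hpn⟩).castSucc (Fin.castSucc_lt_last _)
    rw [tauP_symm_castSucc, tauP_symm_last, Equiv.symm_apply_apply] at this
    rw [if_neg (by simp)] at this
    simp [Fin.lt_def] at this
  · intro hpn j hj
    rw [tauP_symm_last]
    obtain ⟨j', rfl⟩ := Fin.exists_castSucc_eq.mpr (ne_of_lt hj)
    rw [tauP_symm_castSucc]
    have hlt : ((σ.symm j' : Fin n) : ℕ) < (p : ℕ) := by
      have := (σ.symm j').isLt; omega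
    rw [if_pos hlt]
    exact Fin.lt_def.mpr (by simpa using hlt)

lemma gsign_tauP_castSucc {n : ℕ} (σ : Equiv.Perm (Fin n)) (p : Fin (n + 1)) (i : Fin n) :
    gsign (n + 1) (tauP σ p) i.castSucc = gsign n σ i := by
  rw [gsign, gsign]
  refine if_congr ?_ rfl rfl
  constructor
  · intro H j' hj'
    have := H j'.castSucc (Fin.castSucc_lt_castSucc_iff.mpr hj')
    rw [tauP_symm_castSucc, tauP_symm_castSucc] at this
    exact (mono_help (p : ℕ) _ _).mp this
  · intro H j hj
    have hne : j ≠ Fin.last n := by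
      intro e; subst e
      exact absurd (hj.trans (Fin.castSucc_lt_last i)) (lt_irrefl _)
    obtain ⟨j', rfl⟩ := Fin.exists_castSucc_eq.mpr hne
    rw [tauP_symm_castSucc, tauP_symm_castSucc]
    exact (mono_help (p : ℕ) _ _).mpr (H j' (Fin.castSucc_lt_castSucc_iff.mp hj))

lemma tauP_fsign {n : ℕ} (σ : Equiv.Perm (Fin n)) (p : Fin (n + 1)) :
    fsign (n + 1) (tauP σ p) = (if (p : ℕ) = n then (1 : ℝ) else -1) * fsign n σ := by
  rw [fsign, Fin.prod_univ_castSucc, gsign_tauP_last]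
  rw [Finset.prod_congr rfl (fun i _ => gsign_tauP_castSucc σ p i)]
  rw [mul_comm, fsign]


lemma tauP_injective {n : ℕ} :
    Function.Injective fun x : Equiv.Perm (Fin n) × Fin (n + 1) => tauP x.1 x.2 := by
  rintro ⟨σ₁, p₁⟩ ⟨σ₂, p₂⟩ h
  simp only at h
  have happ : ∀ k, tauP σ₁ p₁ k = tauP σ₂ p₂ k := fun k => by rw [h]
  have hp : p₁ = p₂ := by
    have h1 := happ p₁
    rw [tauP_self] at h1
    by_contra hne
    rw [tauP_apply, tauFun] at h1
    rcases lt_trichotomy (p₁ : ℕ) (p₂ : ℕ) with hc | hc | hc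
    · rw [dif_pos hc] at h1
      exact absurd h1.symm (Fin.castSucc_lt_last _).ne
    · exact hne (Fin.ext hc)
    · rw [dif_neg (by omega), dif_neg (by omega)] at h1
      exact absurd h1.symm (Fin.castSucc_lt_last _).ne
  subst hp
  have hσ : σ₁ = σ₂ := by
    apply Equiv.ext; intro j
    by_cases hj : (j : ℕ) < (p₁ : ℕ)
    · have hh := happ j.castSucc
      rw [tauP_apply, tauP_apply,
        tauFun_lt _ _ _ (show (↑(j.castSucc) : ℕ) < (p₁ : ℕ) by simpa using hj)
          (show (↑(j.castSucc) : ℕ) < n by simpa using j.isLt),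
        tauFun_lt _ _ _ (show (↑(j.castSucc) : ℕ) < (p₁ : ℕ) by simpa using hj)
          (show (↑(j.castSucc) : ℕ) < n by simpa using j.isLt)] at hh
      exact Fin.castSucc_injective _ hh
    · have hh := happ j.succ
      rw [tauP_apply, tauP_apply] at hh
      rw [tauFun_gt σ₁ _ _ (show (p₁ : ℕ) < (↑(j.succ) : ℕ) by simp only [Fin.val_succ]; omega)
          (show (↑(j.succ) : ℕ) - 1 < n by simp only [Fin.val_succ]; omega)] at hh
      rw [tauFun_gt σ₂ _ _ (show (p₁ : ℕ) < (↑(j.succ) : ℕ) by simp only [Fin.val_succ]; omega)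
          (show (↑(j.succ) : ℕ) - 1 < n by simp only [Fin.val_succ]; omega)] at hh
      exact Fin.castSucc_injective _ hh
  simp [hσ]

lemma tauP_bijective {n : ℕ} :
    Function.Bijective fun x : Equiv.Perm (Fin n) × Fin (n + 1) => tauP x.1 x.2 := by
  rw [Fintype.bijective_iff_injective_and_card]
  refine ⟨tauP_injective, ?_⟩
  simp [Fintype.card_perm, Nat.factorial_succ, mul_comm]

lemma sum_perm_succ {n : ℕ} (F : Equiv.Perm (Fin (n + 1)) → Ten d) :
    ∑ τ : Equiv.Perm (Fin (n + 1)), F τ =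
      ∑ σ : Equiv.Perm (Fin n), ∑ p : Fin (n + 1), F (tauP σ p) := by
  calc ∑ τ : Equiv.Perm (Fin (n + 1)), F τ
      = ∑ x : Equiv.Perm (Fin n) × Fin (n + 1), F (tauP x.1 x.2) :=
        (Fintype.sum_bijective (fun x : Equiv.Perm (Fin n) × Fin (n + 1) => tauP x.1 x.2)
          tauP_bijective (fun x => F (tauP x.1 x.2)) F (fun x => rfl)).symm
    _ = ∑ σ : Equiv.Perm (Fin n), ∑ p : Fin (n + 1), F (tauP σ p) := by
        exact Fintype.sum_prod_type (f := fun x : Equiv.Perm (Fin n) × Fin (n + 1) => F (tauP x.1 x.2))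

/-- Expansion of the left-bracketed area in the group algebra:
`arealb(ℓ₁⋯ℓ_n) = Σ_{σ ∈ S_n} f_n(σ) ℓ_{σ(1)}⋯ℓ_{σ(n)}`. -/
theorem arealb_group_algebra_expansion (d : ℕ) (hd : 1 ≤ d)
    (n : ℕ) (hn : 1 ≤ n) (ℓ : Fin n → Fin d) :
    arealb (List.ofFn ℓ) =
      ∑ σ : Equiv.Perm (Fin n), fsign n σ • wd (List.ofFn fun k => ℓ (σ k)) := by
  induction n, hn using Nat.le_induction with
  | base =>
      have h2 : ∀ σ : Equiv.Perm (Fin 1), fsign 1 σ = 1 := fun σ => by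
        rw [fsign, Fin.prod_univ_one, gsign, if_pos]
        intro j hj
        exact absurd hj (by omega)
      have h1 : ∀ σ : Equiv.Perm (Fin 1), (List.ofFn fun k => ℓ (σ k)) = List.ofFn ℓ :=
        fun σ => by
          congr 1
          funext k
          exact congrArg ℓ (Subsingleton.elim _ _)
      rw [Finset.sum_congr rfl (fun σ _ => by rw [h2 σ, h1 σ, one_smul])]
      rw [Finset.sum_const]
      have hcard : (Finset.univ : Finset (Equiv.Perm (Fin 1))).card = 1 := by
        simp [Fintype.card_perm]
      rw [hcard, one_nsmul]
      have : List.ofFn ℓ = [ℓ 0] := by simp [List.ofFn_succ]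
      rw [this]
      simp [arealb, arealbRev]
  | succ n hn IH =>
      have h0 : List.ofFn ℓ = (List.ofFn fun i : Fin n => ℓ i.castSucc) ++ [ℓ (Fin.last n)] := by
        rw [List.ofFn_succ', List.concat_eq_append]
      have hne : (List.ofFn fun i : Fin n => ℓ i.castSucc) ≠ [] := by
        intro e
        have := congrArg List.length e
        simp at this
        omega
      rw [h0, arealb_append _ hne _, IH (fun i => ℓ i.castSucc), areaOp_sum_left]
      have hstep : ∀ σ : Equiv.Perm (Fin n),
          fsign n σ • areaOp (wd (List.ofFn fun k => ℓ ((σ k).castSucc))) (wd [ℓ (Fin.last n)]) =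
          ∑ p : Fin (n + 1),
            fsign (n + 1) (tauP σ p) • wd (List.ofFn fun k => ℓ (tauP σ p k)) := by
        intro σ
        rw [areaOp_wd_letter _ (by
          intro e
          have := congrArg List.length e
          simp at this
          omega) (ℓ (Fin.last n))]
        rw [Finset.smul_sum]
        have hL : (List.ofFn fun k : Fin n => ℓ ((σ k).castSucc)).length = n := by simp
        have hrw : ∀ p : Fin (n + 1),
            fsign (n + 1) (tauP σ p) • wd (List.ofFn fun k => ℓ (tauP σ p k)) =
            ((if (p : ℕ) = n then (1 : ℝ) else -1) * fsign n σ) •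
              wd ((List.ofFn fun k : Fin n => ℓ ((σ k).castSucc)).insertIdx p
                (ℓ (Fin.last n))) := fun p => by rw [tauP_fsign, tauP_word]
        rw [Finset.sum_congr rfl fun p _ => hrw p]
        rw [Fin.sum_univ_eq_sum_range (fun p =>
          ((if p = n then (1 : ℝ) else -1) * fsign n σ) •
            wd ((List.ofFn fun k : Fin n => ℓ ((σ k).castSucc)).insertIdx p
              (ℓ (Fin.last n)))) (n + 1)]
        rw [hL]
        refine Finset.sum_congr rfl fun p hp => ?_
        rw [smul_smul, mul_comm]
      rw [Finset.sum_congr rfl (fun σ _ => hstep σ)]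
      exact (sum_perm_succ (fun τ => fsign (n + 1) τ • wd (List.ofFn fun k => ℓ (τ k)))).symm

end
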